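/- Fix k ≥ 1 and consider the collection M_k of matryoshka boxes of degree k in ω^ω, i.e., sets of the form M = {α ∈ ω^ω : CB(α) = j and α ≤* δ} for some j < k and δ < ω^ω with CB(δ) = k−1. The relation M ≺ N iff (rank(M) < rank(N)) or (rank(M) = rank(N) and sup(M) < inf(N)) is a strict well-order on M_k of order type ω^ω · k. -/

import Mathlib

open Ordinal Set

/-- Cantor–Bendixson rank of an ordinal: the exponent of the last term of its
Cantor normal form, with `CB 0 = 0`. -/
noncomputable def CB (o : Ordinal) : Ordinal :=
  ((Ordinal.CNF Ordinal.omega0 o).getLast?.map Prod.fst).getD 0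

/-- `X` is a closed copy of the ordinal `β`: there is an order isomorphism onto
`Iio β` (with the topology induced from the order topology on `Ordinal`) which
is a homeomorphism. -/
def IsClosedCopy (X : Set Ordinal) (β : Ordinal) : Prop :=
  ∃ f : X ≃o (Set.Iio β), Continuous f ∧ Continuous f.symm

/-- `X` is homogeneous of color `i` for the pair coloring `c`. -/
def Homog (c : Ordinal → Ordinal → Fin 2) (X : Set Ordinal) (i : Fin 2) : Prop :=
  ∀ x ∈ X, ∀ y ∈ X, x < y → c x y = i

/-- The closed partition relation `γ →_cl (α,β)²`. -/
def ClPartition (γ α β : Ordinal) : Prop :=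
  ∀ c : Ordinal → Ordinal → Fin 2,
    (∃ X ⊆ Set.Iio γ, IsClosedCopy X α ∧ Homog c X 0) ∨
    (∃ X ⊆ Set.Iio γ, IsClosedCopy X β ∧ Homog c X 1)

/-- `X` is an order-isomorphic copy of the ordinal `β`. -/
def IsOrderCopy (X : Set Ordinal) (β : Ordinal) : Prop :=
  Nonempty (X ≃o Set.Iio β)

/-- The classical partition relation `γ → (α,β)²`. -/
def ClassPartition (γ α β : Ordinal) : Prop :=
  ∀ c : Ordinal → Ordinal → Fin 2,
    (∃ X ⊆ Set.Iio γ, IsOrderCopy X α ∧ Homog c X 0) ∨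
    (∃ X ⊆ Set.Iio γ, IsOrderCopy X β ∧ Homog c X 1)

/-- The ordinal Ramsey number `R(α,β)`: least `γ` with `γ → (α,β)²`. -/
noncomputable def Rord (α β : Ordinal) : Ordinal := sInf {γ | ClassPartition γ α β}

/-- The closed Ramsey number `R^cl(α,β)`: least `γ` with `γ →_cl (α,β)²`. -/
noncomputable def Rcl (α β : Ordinal) : Ordinal := sInf {γ | ClPartition γ α β}

/-- The first uncountable ordinal. -/
noncomputable def omega1 : Ordinal := (Cardinal.aleph 1).ord

/-- One step of the relation `<*`: `α = β + ω^δ` for some `δ > CB β`. -/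
def stepRel (β α : Ordinal) : Prop := ∃ δ : Ordinal, CB β < δ ∧ α = β + Ordinal.omega0 ^ δ

/-- The strict partial order `<*` generated by `stepRel`. -/
def ltStar : Ordinal → Ordinal → Prop := Relation.TransGen stepRel

/-- The reflexive partial order `≤*`. -/
def leStar : Ordinal → Ordinal → Prop := Relation.ReflTransGen stepRel

/-- `T(α) = {β : β <* α} ∪ {α}`, the subtree below the vertex `α`. -/
def Tset (α : Ordinal) : Set Ordinal := {β | ltStar β α} ∪ {α}

/-- `M` is a matryoshka box of degree `k`: for some rank `j < k` and some
`δ < ω^ω` with `CB δ = k − 1`, `M = {α ∈ ω^ω : CB α = j ∧ α ≤* δ}`. -/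
def IsMatBox (k : ℕ) (M : Set Ordinal) : Prop :=
  ∃ j : ℕ, j < k ∧ ∃ δ : Ordinal, δ < Ordinal.omega0 ^ Ordinal.omega0 ∧
    CB δ = ((k : ℕ) - 1 : ℕ) ∧
    M = {a | a < Ordinal.omega0 ^ Ordinal.omega0 ∧ CB a = j ∧ leStar a δ}

/-- The rank of a matryoshka box: the common `CB`-value of its elements. -/
noncomputable def boxRank (M : Set Ordinal) : Ordinal := sSup (CB '' M)

/-- The order `≺` on matryoshka boxes: compare ranks first, then positions. -/
noncomputable def boxPrec (M N : Set Ordinal) : Prop :=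
  boxRank M < boxRank N ∨ (boxRank M = boxRank N ∧ sSup M < sInf N)

/-!
A matryoshka box of degree `k` is `box j δ` with `j < k` and `δ < ω^ω` of Cantor–Bendixson
rank `c = k - 1`. It is nonempty (writing `δ = ω^c (γ + 1)`, it contains `ω^c γ + ω^j`, or `δ`
itself when `j = c`), and it lies strictly above every `δ₀ < δ` of rank `c`, since `a ≤* δ` with
`a ≠ δ` forces `a + ω^c = δ`. Hence `≺` compares boxes lexicographically by `(j, δ)`, i.e. it is
isomorphic to the lexicographic order on `k × {δ < ω^ω | CB δ = c}`. The second factor has order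
type `ω^ω`: it sits inside `Iio (ω^ω)` and contains the increasing image of `γ ↦ ω^c (γ + 1)`.
-/

universe u v

lemma CB_zero : CB 0 = 0 := by simp [CB]

lemma CB_of_ne_zero {o : Ordinal} (h : o ≠ 0) :
    CB o = if o % ω ^ log ω o = 0 then log ω o else CB (o % ω ^ log ω o) := by
  rw [CB, CNF.ne_zero h]
  split_ifs with h2
  · simp [h2]
  · obtain ⟨x, l, hl⟩ := List.exists_cons_of_ne_nil (by simp [CNF.ne_zero h2] :
      CNF ω (o % ω ^ log ω o) ≠ [])
    rw [CB, hl, List.getLast?_cons_cons]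

lemma exists_eq_omega0_opow_CB_mul_add_one {o : Ordinal} (h : o ≠ 0) :
    ∃ γ, o = ω ^ CB o * (γ + 1) := by
  induction o using WellFoundedLT.induction with
  | _ o IH =>
  have ho := (Ordinal.div_add_mod o (ω ^ log ω o)).symm
  rw [CB_of_ne_zero h]
  split_ifs with hr
  · obtain ⟨n, hn⟩ := lt_omega0.1 (div_opow_log_lt o one_lt_omega0)
    have hn0 : n ≠ 0 := by
      rintro rfl
      exact (div_opow_log_pos ω h).ne' (by simpa using hn)
    obtain ⟨m, rfl⟩ := Nat.exists_eq_succ_of_ne_zero hn0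
    refine ⟨m, ?_⟩
    rwa [hr, hn, add_zero, Nat.cast_succ] at ho
  · obtain ⟨γ, hγ⟩ := IH _ (mod_opow_log_lt_self ω h) hr
    set c := CB (o % ω ^ log ω o)
    have hcL : c < log ω o := by
      refine (opow_lt_opow_iff_right one_lt_omega0).1
        (lt_of_le_of_lt ?_ (mod_lt o (opow_ne_zero _ omega0_ne_zero)))
      conv_rhs => rw [hγ]
      exact le_mul_left _ (by positivity)
    have hsplit : ω ^ log ω o = ω ^ c * ω ^ (log ω o - c) := by
      rw [← opow_add, Ordinal.add_sub_cancel_of_le hcL.le]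
    refine ⟨ω ^ (log ω o - c) * (o / ω ^ log ω o) + γ, ?_⟩
    calc o = ω ^ log ω o * (o / ω ^ log ω o) + ω ^ c * (γ + 1) := hγ ▸ ho
      _ = _ := by rw [hsplit, mul_assoc, ← mul_add, ← add_assoc]

lemma not_omega0_dvd_add_one (γ : Ordinal) : ¬ ω ∣ γ + 1 := fun h =>
  Order.not_isSuccPrelimit_succ γ (Order.succ_eq_add_one γ ▸ isSuccPrelimit_iff_omega0_dvd.2 h)

lemma eq_of_omega0_opow_mul_add_one_eq {e e' γ γ' : Ordinal}
    (h : ω ^ e * (γ + 1) = ω ^ e' * (γ' + 1)) : e = e' := by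
  wlog hlt : e < e' generalizing e e' γ γ'
  · exact (lt_or_eq_of_le (not_lt.1 hlt)).elim (fun h' => (this h.symm h').symm) Eq.symm
  rw [← Ordinal.add_sub_cancel_of_le (Order.add_one_le_of_lt hlt), opow_add, opow_add, opow_one,
    mul_assoc, mul_assoc, mul_right_inj' (opow_ne_zero _ omega0_ne_zero)] at h
  exact absurd ⟨_, h⟩ (not_omega0_dvd_add_one γ)

lemma CB_omega0_opow_mul_add_one (e γ : Ordinal) : CB (ω ^ e * (γ + 1)) = e := by
  obtain ⟨γ', hγ'⟩ := exists_eq_omega0_opow_CB_mul_add_one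
    (mul_ne_zero (opow_ne_zero e omega0_ne_zero) (by positivity : γ + 1 ≠ 0))
  exact (eq_of_omega0_opow_mul_add_one_eq hγ').symm

lemma CB_omega0_opow (e : Ordinal) : CB (ω ^ e) = e := by
  simpa using CB_omega0_opow_mul_add_one e 0

lemma CB_add (a : Ordinal) {r : Ordinal} (hr : r ≠ 0) : CB (a + r) = CB r := by
  obtain ⟨γ, hγ⟩ := exists_eq_omega0_opow_CB_mul_add_one hr
  set e := CB r
  have habs : a % ω ^ e + r = r := by
    refine add_of_omega0_opow_le (mod_lt a (opow_ne_zero _ omega0_ne_zero)) ?_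
    conv_rhs => rw [hγ]
    exact le_mul_left _ (by positivity)
  rw [← div_add_mod a (ω ^ e), add_assoc, habs, hγ, ← mul_add, ← add_assoc,
    CB_omega0_opow_mul_add_one]

lemma CB_lt_of_lt_omega0_opow {r c : Ordinal} (hr : r ≠ 0) (h : r < ω ^ c) : CB r < c := by
  obtain ⟨γ, hγ⟩ := exists_eq_omega0_opow_CB_mul_add_one hr
  refine (opow_lt_opow_iff_right one_lt_omega0).1 (lt_of_le_of_lt ?_ h)
  conv_rhs => rw [hγ]
  exact le_mul_left _ (by positivity)

lemma leStar_iff {a δ : Ordinal} :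
    leStar a δ ↔ a = δ ∨ (CB a < CB δ ∧ a + ω ^ CB δ = δ) := by
  constructor
  · intro h
    induction h with
    | refl => exact Or.inl rfl
    | @tail b _ _ hbc ih =>
      obtain ⟨e, he, rfl⟩ := hbc
      rw [CB_add _ (opow_ne_zero e omega0_ne_zero), CB_omega0_opow]
      rcases ih with rfl | ⟨hab, hb⟩
      · exact Or.inr ⟨he, rfl⟩
      · refine Or.inr ⟨hab.trans he, ?_⟩
        conv_rhs => rw [← hb]
        rw [add_assoc, add_of_omega0_opow_le ((opow_lt_opow_iff_right one_lt_omega0).2 he) le_rfl]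
  · rintro (rfl | ⟨hlt, heq⟩)
    · exact Relation.ReflTransGen.refl
    · exact Relation.ReflTransGen.single ⟨CB δ, hlt, heq.symm⟩

lemma le_of_leStar {a δ : Ordinal} (h : leStar a δ) : a ≤ δ := by
  rcases leStar_iff.1 h with rfl | ⟨-, hδ⟩
  · exact le_rfl
  · exact hδ ▸ le_self_add

lemma lt_of_leStar_of_lt {a δ δ' : Ordinal} (hCB : CB δ = CB δ') (hlt : δ < δ')
    (ha : leStar a δ') : δ < a := by
  rcases leStar_iff.1 ha with rfl | ⟨hCBa, hδ'⟩
  · exact hlt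
  by_contra! hle
  obtain ⟨r, rfl⟩ : ∃ r, δ = a + r := ⟨δ - a, (Ordinal.add_sub_cancel_of_le hle).symm⟩
  have hr : r ≠ 0 := by
    rintro rfl
    exact hCBa.ne (by rwa [add_zero] at hCB)
  have hr_lt : r < ω ^ CB δ' := by
    rw [← hδ'] at hlt
    exact (add_lt_add_iff_left a).1 hlt
  exact (CB_lt_of_lt_omega0_opow hr hr_lt).ne (CB_add a hr ▸ hCB)

def box (j δ : Ordinal) : Set Ordinal := {a | a < ω ^ ω ∧ CB a = j ∧ leStar a δ}

lemma bddAbove_box (j δ : Ordinal) : BddAbove (box j δ) :=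
  ⟨δ, fun _ ha => le_of_leStar ha.2.2⟩

lemma box_nonempty {j δ : Ordinal} (hδ : δ < ω ^ ω) (hj : j ≤ CB δ) : (box j δ).Nonempty := by
  rcases hj.lt_or_eq with hj | rfl
  · have hδ0 : δ ≠ 0 := by
      rintro rfl
      exact not_lt_zero (CB_zero ▸ hj)
    obtain ⟨γ, hγ⟩ := exists_eq_omega0_opow_CB_mul_add_one hδ0
    have hj' : ω ^ j < ω ^ CB δ := (opow_lt_opow_iff_right one_lt_omega0).2 hj
    have hstep : ω ^ CB δ * γ + ω ^ j + ω ^ CB δ = δ := by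
      rw [add_assoc, add_of_omega0_opow_le hj' le_rfl, ← mul_add_one, ← hγ]
    refine ⟨ω ^ CB δ * γ + ω ^ j, ?_, ?_, leStar_iff.2 (Or.inr ⟨?_, hstep⟩)⟩
    · exact lt_of_lt_of_le (lt_add_of_pos_right _ (opow_pos _ omega0_pos)) (hstep ▸ hδ.le)
    · rw [CB_add _ (opow_ne_zero _ omega0_ne_zero), CB_omega0_opow]
    · rwa [CB_add _ (opow_ne_zero _ omega0_ne_zero), CB_omega0_opow]
  · exact ⟨δ, hδ, rfl, Relation.ReflTransGen.refl⟩

lemma boxRank_box {j δ : Ordinal} (h : (box j δ).Nonempty) : boxRank (box j δ) = j := by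
  rw [boxRank, Set.image_congr fun a ha => ha.2.1, h.image_const, csSup_singleton]

lemma sSup_box_lt_sInf_box {j δ δ' : Ordinal} (hne : (box j δ').Nonempty) (hCB : CB δ = CB δ')
    (hlt : δ < δ') : sSup (box j δ) < sInf (box j δ') :=
  (csSup_le' fun _ ha => le_of_leStar ha.2.2).trans_lt
    (lt_of_leStar_of_lt hCB hlt (csInf_mem hne).2.2)

lemma boxPrec_box_iff {j j' δ δ' : Ordinal} (hne : (box j δ).Nonempty)
    (hne' : (box j' δ').Nonempty) (hCB : CB δ = CB δ') :
    boxPrec (box j δ) (box j' δ') ↔ j < j' ∨ j = j' ∧ δ < δ' := by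
  rw [boxPrec, boxRank_box hne, boxRank_box hne']
  refine or_congr_right (and_congr_right fun hj => ?_)
  subst hj
  have hle : sInf (box j δ) ≤ sSup (box j δ) :=
    csInf_le_csSup hne (OrderBot.bddBelow _) (bddAbove_box j δ)
  have hle' : sInf (box j δ') ≤ sSup (box j δ') :=
    csInf_le_csSup hne' (OrderBot.bddBelow _) (bddAbove_box j δ')
  refine ⟨fun h => ?_, sSup_box_lt_sInf_box hne' hCB⟩
  rcases lt_trichotomy δ δ' with hlt | rfl | hgt
  · exact hlt
  · exact absurd (h.trans_le hle) (lt_irrefl _)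
  · exact absurd (((h.trans_le hle').trans (sSup_box_lt_sInf_box hne hCB.symm hgt)).trans_le hle)
      (lt_irrefl _)

def cbLevel (c : Ordinal) : Set Ordinal := {δ | δ < ω ^ ω ∧ CB δ = c}

lemma omega0_opow_mul_add_one_lt {c γ : Ordinal} (hc : c < ω) (hγ : γ < ω ^ ω) :
    ω ^ c * (γ + 1) < ω ^ ω := by
  have hlim : Order.IsSuccLimit (ω ^ ω : Ordinal) :=
    isSuccLimit_opow one_lt_omega0 isSuccLimit_omega0
  calc ω ^ c * (γ + 1) < ω ^ c * ω ^ ω :=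
        (mul_lt_mul_iff_right₀ (opow_pos _ omega0_pos)).2 (hlim.add_one_lt hγ)
    _ = ω ^ ω := by rw [← opow_add, add_omega0 hc]

lemma type_cbLevel {c : Ordinal.{u}} (hc : c < ω) :
    typeLT (cbLevel c) = lift.{u + 1} (ω ^ ω : Ordinal.{u}) := by
  rw [← type_lt_Iio]
  apply le_antisymm <;> refine type_le_iff'.2 ⟨OrderEmbedding.ltEmbedding ?_⟩
  · exact OrderEmbedding.ofStrictMono (Set.inclusion fun _ h => h.1) fun _ _ h => h
  · refine OrderEmbedding.ofStrictMono
      (fun γ => ⟨ω ^ c * (γ + 1), omega0_opow_mul_add_one_lt hc γ.2,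
        CB_omega0_opow_mul_add_one _ _⟩)
      fun γ γ' h => (mul_lt_mul_iff_right₀ (opow_pos _ omega0_pos)).2 (by simpa using h)

lemma lt_omega0_opow_omega0_iff {x : Ordinal} : x < ω ^ ω ↔ ∃ n : ℕ, x < ω ^ n := by
  rw [← iSup_pow_natCast omega0_pos, Ordinal.lt_iSup_iff]

lemma lift_omega0_opow_omega0 : lift.{v} (ω ^ ω : Ordinal.{u}) = ω ^ ω := by
  have hpow (n : ℕ) : lift.{v} (ω ^ n : Ordinal.{u}) = ω ^ n := by
    induction n with
    | zero => simp
    | succ n ih => rw [pow_succ, pow_succ, lift_mul, ih, lift_omega0]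
  apply le_antisymm <;> refine le_of_forall_lt fun x hx => ?_
  · obtain ⟨a, ha, rfl⟩ := lt_lift_iff.1 hx
    obtain ⟨n, hn⟩ := lt_omega0_opow_omega0_iff.1 ha
    exact lt_omega0_opow_omega0_iff.2 ⟨n, hpow n ▸ lift_lt.2 hn⟩
  · obtain ⟨n, hn⟩ := lt_omega0_opow_omega0_iff.1 hx
    exact (hpow n ▸ hn).trans_le (lift_le.2 (lt_omega0_opow_omega0_iff.2
      ⟨n + 1, pow_lt_pow_right₀ one_lt_omega0 n.lt_succ_self⟩).le)

lemma le_natCast_sub_one_of_lt {j : Ordinal} {k : ℕ} (h : j < k) :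
    j ≤ ((k - 1 : ℕ) : Ordinal) := by
  obtain ⟨n, rfl⟩ := lt_omega0.1 (h.trans (natCast_lt_omega0 k))
  exact_mod_cast Nat.le_sub_one_of_lt (Nat.cast_lt.1 h)

lemma isMatBox_iff {k : ℕ} {M : Set Ordinal} :
    IsMatBox k M ↔ ∃ j < (k : Ordinal), ∃ δ ∈ cbLevel ((k - 1 : ℕ) : Ordinal), M = box j δ := by
  constructor
  · rintro ⟨j, hj, δ, hδ, hCB, rfl⟩
    exact ⟨j, Nat.cast_lt.2 hj, δ, ⟨hδ, hCB⟩, rfl⟩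
  · rintro ⟨j, hj, δ, ⟨hδ, hCB⟩, rfl⟩
    obtain ⟨n, rfl⟩ := lt_omega0.1 (hj.trans (natCast_lt_omega0 k))
    exact ⟨n, Nat.cast_lt.1 hj, δ, hδ, hCB, rfl⟩

lemma box_nonempty_of_mem_cbLevel {k : ℕ} {j δ : Ordinal} (hj : j < k)
    (hδ : δ ∈ cbLevel ((k - 1 : ℕ) : Ordinal)) : (box j δ).Nonempty :=
  box_nonempty hδ.1 (hδ.2 ▸ le_natCast_sub_one_of_lt hj)

-- The index `j` ranges over `Iio (k : Ordinal)` rather than `Fin k` so that both factors live in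
-- the same universe, as `type_prod_lex` requires.
noncomputable def matBoxRelIso (k : ℕ) :
    Prod.Lex (α := Iio (k : Ordinal)) (β := cbLevel ((k - 1 : ℕ) : Ordinal)) (· < ·) (· < ·) ≃r
      (fun M N : {M : Set Ordinal // IsMatBox k M} => boxPrec M.1 N.1) := by
  let f (p : Iio (k : Ordinal) × cbLevel ((k - 1 : ℕ) : Ordinal)) :
      {M : Set Ordinal // IsMatBox k M} :=
    ⟨box p.1 p.2, isMatBox_iff.2 ⟨p.1, p.1.2, p.2, p.2.2, rfl⟩⟩
  have hf (p q) : boxPrec (f p).1 (f q).1 ↔ Prod.Lex (· < ·) (· < ·) p q := by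
    simp only [Prod.lex_def, ← Subtype.coe_lt_coe, Subtype.ext_iff]
    exact boxPrec_box_iff (box_nonempty_of_mem_cbLevel p.1.2 p.2.2)
      (box_nonempty_of_mem_cbLevel q.1.2 q.2.2) (p.2.2.2.trans q.2.2.2.symm)
  have hinj : Function.Injective f := by
    intro p q hpq
    rcases trichotomous_of (Prod.Lex (· < ·) (· < ·)) p q with h | h | h
    · exact absurd ((hf q q).1 (hpq ▸ (hf p q).2 h)) (irrefl q)
    · exact h
    · exact absurd ((hf q q).1 (hpq ▸ (hf q p).2 h)) (irrefl q)
  refine RelIso.ofSurjective ⟨⟨f, hinj⟩, (hf _ _)⟩ fun M => ?_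
  obtain ⟨j, hj, δ, hδ, hM⟩ := isMatBox_iff.1 M.2
  exact ⟨(⟨j, hj⟩, ⟨δ, hδ⟩), Subtype.ext hM.symm⟩

instance isWellOrder_boxPrec (k : ℕ) :
    IsWellOrder {M : Set Ordinal // IsMatBox k M} (fun M N => boxPrec M.1 N.1) :=
  (matBoxRelIso k).symm.toRelEmbedding.isWellOrder

lemma type_boxPrec (k : ℕ) :
    type (fun M N : {M : Set Ordinal.{u} // IsMatBox k M} => boxPrec M.1 N.1) =
      lift.{u + 1} (ω ^ ω * k : Ordinal.{u}) := by
  rw [← (matBoxRelIso k).ordinalType_congr, type_prod_lex, type_cbLevel (natCast_lt_omega0 _),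
    type_lt_Iio, lift_mul]

-- Instance search does not see through `Set` to find the `Subrel r p` instance for `p = Iio o`.
instance isWellOrder_subrel_Iio (o : Ordinal) :
    IsWellOrder (Subtype (Iio o)) (Subrel ((· < ·) : Ordinal → Ordinal → Prop) (Iio o)) :=
  inferInstanceAs (IsWellOrder (Subtype fun x => x < o) (Subrel (· < ·) fun x => x < o))

lemma type_subrel_Iio (o : Ordinal.{u}) :
    type (Subrel ((· < ·) : Ordinal → Ordinal → Prop) (Iio o)) = lift.{u + 1} o :=
  type_lt_Iio o

theorem stmt_18_general (k : ℕ) :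
    ∃ _h : IsWellOrder {M : Set Ordinal // IsMatBox k M}
        (fun M N => boxPrec M.1 N.1),
      Nonempty ((fun M N : {M : Set Ordinal // IsMatBox k M} => boxPrec M.1 N.1) ≃r
        Subrel ((· < ·) : Ordinal → Ordinal → Prop)
          (Set.Iio (Ordinal.omega0 ^ Ordinal.omega0 * k))) := by
  refine ⟨inferInstance, lift_type_eq.{_, _, 0}.1 ?_⟩
  rw [type_boxPrec, type_subrel_Iio, lift_lift, lift_lift, lift_mul, lift_mul, lift_natCast,
    lift_natCast, lift_omega0_opow_omega0, lift_omega0_opow_omega0]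

/-- For `k ≥ 1`, the relation `≺` is a strict well-order on the collection of
matryoshka boxes of degree `k`, of order type `ω^ω · k`. -/
theorem stmt_18 (k : ℕ) (hk : 1 ≤ k) :
    ∃ _h : IsWellOrder {M : Set Ordinal // IsMatBox k M}
        (fun M N => boxPrec M.1 N.1),
      Nonempty ((fun M N : {M : Set Ordinal // IsMatBox k M} => boxPrec M.1 N.1) ≃r
        Subrel ((· < ·) : Ordinal → Ordinal → Prop)
          (Set.Iio (Ordinal.omega0 ^ Ordinal.omega0 * k))) :=
  stmt_18_general k
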